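/- arXiv:1209.4909 — 2 statements merged into one kernel-verified Lean document; each statement's English description precedes it below -/
import Mathlib

section
/- Let a ≥ b > 0. Then 2√(a² + b²)·E(a/√(a² + b²)) − (√(a² + b²) + a)·E( 2√(a·√(a² + b²)) / (a + √(a² + b²)) ) = (b²/√(a² + b²))·K(a/√(a² + b²)), where K(k) = ∫₀^{π/2} dθ/√(1 − k² sin²θ) and E(k) = ∫₀^{π/2} √(1 − k² sin²θ) dθ. -/
/-! With `c = √(a² + b²)` and `k = a / c`, the second modulus is Landen's ascending
transform `2√k / (1 + k)` of `k`, and the identity becomes Landen's transformation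
`(1 + k) E(2√k / (1 + k)) = 2 E(k) − (1 − k²) K(k)`.
To prove it, substitute `sin φ = (1 + k) sin θ / (1 + k sin² θ)` in `E(2√k / (1 + k))`.
With `Δ = √(1 − k² sin² θ)` the integrand becomes `(1 + k)(1 − k sin² θ)² / ((1 + k sin² θ)² Δ)`,
and `2Δ − (1 − k²)/Δ` minus `(1 + k)` times it is the derivative of
`−2k sin θ cos θ Δ / (1 + k sin² θ)`, which vanishes at `0` and `π/2`. -/

open Real

/-- Complete elliptic integral of the first kind. -/
noncomputable def ellipticK (k : ℝ) : ℝ :=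
  ∫ θ in (0:ℝ)..(π / 2), 1 / Real.sqrt (1 - k ^ 2 * Real.sin θ ^ 2)

/-- Complete elliptic integral of the second kind. -/
noncomputable def ellipticE (k : ℝ) : ℝ :=
  ∫ θ in (0:ℝ)..(π / 2), Real.sqrt (1 - k ^ 2 * Real.sin θ ^ 2)

open intervalIntegral
open MeasureTheory (volume)

section Landen

variable {k : ℝ}

lemma one_sub_sq_mul_sin_sq_pos (hk : k ^ 2 < 1) (θ : ℝ) : 0 < 1 - k ^ 2 * sin θ ^ 2 := by
  nlinarith [sin_sq_le_one θ, sq_nonneg (sin θ)]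

noncomputable def landenAmplitude (k θ : ℝ) : ℝ :=
  arcsin ((1 + k) * sin θ / (1 + k * sin θ ^ 2))

lemma one_sub_landen_sq (hk : 0 ≤ k) (θ : ℝ) :
    1 - ((1 + k) * sin θ / (1 + k * sin θ ^ 2)) ^ 2
      = cos θ ^ 2 * (1 - k ^ 2 * sin θ ^ 2) / (1 + k * sin θ ^ 2) ^ 2 := by
  have : 0 < 1 + k * sin θ ^ 2 := by positivity
  rw [cos_sq']
  field_simp
  ring

lemma sin_landenAmplitude (hk : 0 ≤ k) (hk1 : k ≤ 1) (θ : ℝ) :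
    sin (landenAmplitude k θ) = (1 + k) * sin θ / (1 + k * sin θ ^ 2) := by
  have hsq : ((1 + k) * sin θ / (1 + k * sin θ ^ 2)) ^ 2 ≤ 1 := by
    have h := one_sub_landen_sq hk θ
    have : 0 ≤ 1 - k ^ 2 * sin θ ^ 2 := by
      nlinarith [sin_sq_le_one θ, sq_nonneg (sin θ), mul_le_one₀ hk1 hk hk1]
    have : 0 ≤ cos θ ^ 2 * (1 - k ^ 2 * sin θ ^ 2) / (1 + k * sin θ ^ 2) ^ 2 := by positivity
    linarith
  obtain ⟨h₁, h₂⟩ := abs_le.1 (sq_le_one_iff_abs_le_one _ |>.1 hsq)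
  exact sin_arcsin h₁ h₂

lemma landenAmplitude_zero : landenAmplitude k 0 = 0 := by
  simp [landenAmplitude]

lemma landenAmplitude_pi_div_two (hk : 0 ≤ k) : landenAmplitude k (π / 2) = π / 2 := by
  have : 1 + k ≠ 0 := by positivity
  simp [landenAmplitude, div_self this]

lemma hasDerivAt_landenAmplitude (hk : 0 ≤ k) (hk1 : k < 1) {θ : ℝ} (hθ : 0 < cos θ) :
    HasDerivAt (landenAmplitude k)
      ((1 + k) * (1 - k * sin θ ^ 2) / ((1 + k * sin θ ^ 2) * √(1 - k ^ 2 * sin θ ^ 2))) θ := by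
  have hq : 0 < 1 + k * sin θ ^ 2 := by positivity
  have hΔ := one_sub_sq_mul_sin_sq_pos (by nlinarith : k ^ 2 < 1) θ
  have hroot : √(1 - ((1 + k) * sin θ / (1 + k * sin θ ^ 2)) ^ 2)
      = cos θ * √(1 - k ^ 2 * sin θ ^ 2) / (1 + k * sin θ ^ 2) := by
    rw [one_sub_landen_sq hk, sqrt_div' _ (by positivity), sqrt_mul' _ hΔ.le, sqrt_sq hθ.le,
      sqrt_sq hq.le]
  have hlt : ((1 + k) * sin θ / (1 + k * sin θ ^ 2)) ^ 2 < 1 := by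
    have h := one_sub_landen_sq hk θ
    have : 0 < cos θ ^ 2 * (1 - k ^ 2 * sin θ ^ 2) / (1 + k * sin θ ^ 2) ^ 2 := by positivity
    linarith
  obtain ⟨h₁, h₂⟩ := abs_lt.1 (sq_lt_one_iff_abs_lt_one _ |>.1 hlt)
  have hw : HasDerivAt (fun t => (1 + k) * sin t / (1 + k * sin t ^ 2))
      (((1 + k) * cos θ * (1 + k * sin θ ^ 2) - (1 + k) * sin θ * (k * (2 * sin θ * cos θ)))
        / (1 + k * sin θ ^ 2) ^ 2) θ := by
    have hs2 : HasDerivAt (fun t => 1 + k * sin t ^ 2) (k * (2 * sin θ * cos θ)) θ := by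
      simpa using (((hasDerivAt_sin θ).pow 2).const_mul k).const_add 1
    exact ((hasDerivAt_sin θ).const_mul (1 + k)).div hs2 hq.ne'
  refine ((hasDerivAt_arcsin h₁.ne' h₂.ne).comp θ hw).congr_deriv ?_
  rw [hroot]
  field_simp
  ring

lemma sqrt_one_sub_sq_mul_sin_landenAmplitude_sq (hk : 0 ≤ k) (hk1 : k ≤ 1) (θ : ℝ) :
    √(1 - (2 * √k / (1 + k)) ^ 2 * sin (landenAmplitude k θ) ^ 2)
      = (1 - k * sin θ ^ 2) / (1 + k * sin θ ^ 2) := by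
  have hq : 0 < 1 + k * sin θ ^ 2 := by positivity
  have hks : 0 ≤ 1 - k * sin θ ^ 2 := by nlinarith [sin_sq_le_one θ, sq_nonneg (sin θ)]
  rw [sin_landenAmplitude hk hk1, ← Real.sqrt_sq (div_nonneg hks hq.le)]
  congr 1
  have : 1 + k ≠ 0 := by positivity
  field_simp
  rw [sq_sqrt hk]
  ring

lemma continuous_landenAmplitude (hk : 0 ≤ k) : Continuous (landenAmplitude k) :=
  continuous_arcsin.comp <| by
    fun_prop (disch := intro θ; positivity)

lemma ellipticE_landen_eq_integral (hk : 0 ≤ k) (hk1 : k < 1) :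
    ellipticE (2 * √k / (1 + k)) = ∫ θ in (0:ℝ)..(π / 2),
      (1 + k) * (1 - k * sin θ ^ 2) ^ 2 /
        ((1 + k * sin θ ^ 2) ^ 2 * √(1 - k ^ 2 * sin θ ^ 2)) := by
  have hπ : (0:ℝ) ≤ π / 2 := by positivity
  have hΔ := one_sub_sq_mul_sin_sq_pos (by nlinarith : k ^ 2 < 1)
  have hsubst := integral_comp_mul_deriv'' (a := 0) (b := π / 2)
    (g := fun u => √(1 - (2 * √k / (1 + k)) ^ 2 * sin u ^ 2))
    (continuous_landenAmplitude hk).continuousOn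
    (fun θ hθ => by
      rw [min_eq_left hπ, max_eq_right hπ] at hθ
      have hcos : 0 < cos θ := cos_pos_of_mem_Ioo ⟨by linarith [hθ.1], hθ.2⟩
      exact (hasDerivAt_landenAmplitude hk hk1 hcos).hasDerivWithinAt)
    (Continuous.continuousOn <| by
      fun_prop (disch := intro θ; have := sqrt_pos.2 (hΔ θ); positivity))
    (by fun_prop)
  rw [landenAmplitude_zero, landenAmplitude_pi_div_two hk] at hsubst
  rw [ellipticE, ← hsubst]
  refine integral_congr fun θ _ => ?_
  have hq : 0 < 1 + k * sin θ ^ 2 := by positivity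
  have := sqrt_pos.2 (hΔ θ)
  simp only [Function.comp_apply, sqrt_one_sub_sq_mul_sin_landenAmplitude_sq hk hk1.le]
  field_simp

lemma hasDerivAt_landen_correction (hk : 0 ≤ k) (hk1 : k < 1) (θ : ℝ) :
    HasDerivAt
      (fun t => -2 * k * sin t * cos t * √(1 - k ^ 2 * sin t ^ 2) / (1 + k * sin t ^ 2))
      (2 * √(1 - k ^ 2 * sin θ ^ 2) - (1 - k ^ 2) * (1 / √(1 - k ^ 2 * sin θ ^ 2))
        - (1 + k) * ((1 + k) * (1 - k * sin θ ^ 2) ^ 2 /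
            ((1 + k * sin θ ^ 2) ^ 2 * √(1 - k ^ 2 * sin θ ^ 2)))) θ := by
  have hΔ := one_sub_sq_mul_sin_sq_pos (by nlinarith : k ^ 2 < 1) θ
  have hq : 0 < 1 + k * sin θ ^ 2 := by positivity
  have hsqrt := (((hasDerivAt_sin θ).pow 2).const_mul (k ^ 2)).const_sub 1 |>.sqrt hΔ.ne'
  have hden := (((hasDerivAt_sin θ).pow 2).const_mul k).const_add 1
  refine ((((hasDerivAt_sin θ).const_mul (-2 * k)).mul (hasDerivAt_cos θ)).mul hsqrt
    |>.div hden hq.ne').congr_deriv ?_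
  have hS : √(1 - k ^ 2 * sin θ ^ 2) ^ 2 = 1 - k ^ 2 * sin θ ^ 2 := sq_sqrt hΔ.le
  have := sqrt_pos.2 hΔ
  simp only [Pi.mul_apply, Pi.pow_apply]
  field_simp
  rw [cos_sq', hS]
  ring

theorem one_add_mul_ellipticE_landen (hk : 0 ≤ k) (hk1 : k < 1) :
    (1 + k) * ellipticE (2 * √k / (1 + k)) = 2 * ellipticE k - (1 - k ^ 2) * ellipticK k := by
  have hΔ θ : 0 < √(1 - k ^ 2 * sin θ ^ 2) :=
    sqrt_pos.2 (one_sub_sq_mul_sin_sq_pos (by nlinarith) θ)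
  have hE : IntervalIntegrable (fun θ => 2 * √(1 - k ^ 2 * sin θ ^ 2)) volume 0 (π / 2) :=
    Continuous.intervalIntegrable (by fun_prop) _ _
  have hK : IntervalIntegrable (fun θ => (1 - k ^ 2) * (1 / √(1 - k ^ 2 * sin θ ^ 2)))
      volume 0 (π / 2) :=
    Continuous.intervalIntegrable (by fun_prop (disch := exact fun θ => (hΔ θ).ne')) _ _
  have hL : IntervalIntegrable (fun θ => (1 + k) * ((1 + k) * (1 - k * sin θ ^ 2) ^ 2 /
      ((1 + k * sin θ ^ 2) ^ 2 * √(1 - k ^ 2 * sin θ ^ 2)))) volume 0 (π / 2) :=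
    Continuous.intervalIntegrable
      (by fun_prop (disch := intro θ; have := hΔ θ; positivity)) _ _
  have hFTC := integral_eq_sub_of_hasDerivAt (fun θ _ => hasDerivAt_landen_correction hk hk1 θ)
    ((hE.sub hK).sub hL)
  rw [integral_sub (hE.sub hK) hL, integral_sub hE hK, integral_const_mul, integral_const_mul,
    integral_const_mul, ← ellipticE_landen_eq_integral hk hk1, ← ellipticE, ← ellipticK] at hFTC
  simp only [cos_pi_div_two, sin_zero, mul_zero, zero_mul, zero_div, sub_self] at hFTC
  linarith

end Landen

/-- Equality of the analytic and Landen's synthetic determination of the limit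
hyperbolic excess of the hyperbola `x²/a² − y²/b² = 1`. -/
theorem landen_maclaurin_excess_identity (a b : ℝ) (hb : 0 < b) (hab : b ≤ a) :
    2 * Real.sqrt (a ^ 2 + b ^ 2) * ellipticE (a / Real.sqrt (a ^ 2 + b ^ 2))
      - (Real.sqrt (a ^ 2 + b ^ 2) + a) *
        ellipticE (2 * Real.sqrt (a * Real.sqrt (a ^ 2 + b ^ 2)) /
          (a + Real.sqrt (a ^ 2 + b ^ 2)))
      = b ^ 2 / Real.sqrt (a ^ 2 + b ^ 2) *
          ellipticK (a / Real.sqrt (a ^ 2 + b ^ 2)) := by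
  have ha : 0 < a := hb.trans_le hab
  set c := √(a ^ 2 + b ^ 2)
  have hc2 : c ^ 2 = a ^ 2 + b ^ 2 := sq_sqrt (by positivity)
  have hc : 0 < c := sqrt_pos.2 (by positivity)
  have hmod : 2 * √(a * c) / (a + c) = 2 * √(a / c) / (1 + a / c) := by
    rw [show a * c = c ^ 2 * (a / c) by field_simp, sqrt_mul (sq_nonneg c), sqrt_sq hc.le]
    field_simp
    ring
  have hlanden := one_add_mul_ellipticE_landen (k := a / c) (by positivity)
    ((div_lt_one hc).2 (by nlinarith))
  calc 2 * c * ellipticE (a / c) - (c + a) * ellipticE (2 * √(a * c) / (a + c))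
      = 2 * c * ellipticE (a / c)
          - c * ((1 + a / c) * ellipticE (2 * √(a / c) / (1 + a / c))) := by
        rw [hmod]
        field_simp
    _ = b ^ 2 / c * ellipticK (a / c) := by
        rw [hlanden]
        field_simp
        linear_combination ellipticK (a / c) * hc2
end

section
/- Let 0 < k < 1 and 0 < u ≤ 1, and set k̂ = 2√k/(1 + k) and v = √( (1 + k u² − √((1 − u²)(1 − k²u²))) / 2 ). Then ∫₀^u dz / √((1 − z²)(1 − k²z²)) = (2/(1 + k))·∫₀^v dz / √((1 − z²)(1 − k̂²z²)). -/
/-!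
Landen's substitution `v(x) = √A` with `A = (1 + k x² - S) / 2` and `S = √((1 - x²)(1 - k²x²))`
turns the elliptic differential of modulus `k` into `(1 + k) / 2` times the one of modulus
`k̂ = 2√k / (1 + k)`. With `Q = 1 + k² - 2k²x² + 2kS` one has `4A(1 - A) = x²Q` and
`(1 + k)²(1 - k̂²A) = Q`, hence `√((1 - v²)(1 - k̂²v²)) = xQ / (2(1 + k)v)`, while
`v' = xQ / (4Sv)`. As `v` is increasing, the change of variables needs no integrability
hypothesis, so the improper case `u = 1` is covered as well.
-/

open Set intervalIntegral

noncomputable def ellipticRadical (k z : ℝ) : ℝ := √((1 - z ^ 2) * (1 - k ^ 2 * z ^ 2))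

noncomputable def landenSq (k x : ℝ) : ℝ := (1 + k * x ^ 2 - ellipticRadical k x) / 2

noncomputable def landenMap (k x : ℝ) : ℝ := √(landenSq k x)

section

variable {k m x : ℝ}

lemma ellipticRadical_sq (hk : k ^ 2 ≤ 1) (hx : x ^ 2 ≤ 1) :
    ellipticRadical k x ^ 2 = (1 - x ^ 2) * (1 - k ^ 2 * x ^ 2) :=
  Real.sq_sqrt (mul_nonneg (by linarith) (by nlinarith))

lemma ellipticRadical_pos (hk : k ^ 2 ≤ 1) (hx : x ^ 2 < 1) : 0 < ellipticRadical k x :=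
  Real.sqrt_pos.mpr (mul_pos (by linarith) (by nlinarith))

lemma landenSq_pos (hk0 : 0 ≤ k) (hk1 : k ≤ 1) (hx0 : x ≠ 0) (hx1 : x ^ 2 ≤ 1) :
    0 < landenSq k x := by
  have hS := ellipticRadical_sq (k := k) (by nlinarith) hx1
  -- `(1 + k x²)² - S² = (1 + k)² x²`
  have : ellipticRadical k x < 1 + k * x ^ 2 := by
    refine lt_of_pow_lt_pow_left₀ 2 (by positivity) ?_
    have : 0 < (1 + k) ^ 2 * x ^ 2 := by positivity
    linear_combination this + hS
  unfold landenSq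
  linarith

lemma four_mul_landenSq_mul_one_sub (hk : k ^ 2 ≤ 1) (hx : x ^ 2 ≤ 1) :
    4 * landenSq k x * (1 - landenSq k x)
      = x ^ 2 * (1 + k ^ 2 - 2 * k ^ 2 * x ^ 2 + 2 * k * ellipticRadical k x) := by
  unfold landenSq
  linear_combination (-1 : ℝ) * ellipticRadical_sq hk hx

lemma sq_one_add_mul_one_sub_landenSq (hm : m ^ 2 * (1 + k) ^ 2 = 4 * k) :
    (1 + k) ^ 2 * (1 - m ^ 2 * landenSq k x)
      = 1 + k ^ 2 - 2 * k ^ 2 * x ^ 2 + 2 * k * ellipticRadical k x := by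
  unfold landenSq
  linear_combination (-(1 + k * x ^ 2 - ellipticRadical k x) / 2) * hm

lemma landen_numerator_pos (hk0 : 0 ≤ k) (hk1 : k ≤ 1) (hx : x ^ 2 < 1) :
    0 < 1 + k ^ 2 - 2 * k ^ 2 * x ^ 2 + 2 * k * ellipticRadical k x := by
  have hkx : k ^ 2 * x ^ 2 < 1 := by
    nlinarith [mul_le_mul_of_nonneg_right (pow_le_one₀ hk0 hk1 : k ^ 2 ≤ 1) (sq_nonneg x)]
  have := mul_nonneg (sq_nonneg k) (sub_nonneg.mpr hx.le)
  have := mul_nonneg hk0 (Real.sqrt_nonneg ((1 - x ^ 2) * (1 - k ^ 2 * x ^ 2)))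
  unfold ellipticRadical
  linarith

lemma ellipticRadical_landenMap (hm : m ^ 2 * (1 + k) ^ 2 = 4 * k) (hk0 : 0 ≤ k) (hk1 : k ≤ 1)
    (hx0 : 0 < x) (hx1 : x < 1) :
    ellipticRadical m (landenMap k x)
      = x * (1 + k ^ 2 - 2 * k ^ 2 * x ^ 2 + 2 * k * ellipticRadical k x)
        / (2 * (1 + k) * landenMap k x) := by
  have hx2 : x ^ 2 < 1 := by nlinarith
  have hA := landenSq_pos hk0 hk1 hx0.ne' hx2.le
  have hG : landenMap k x ^ 2 = landenSq k x := Real.sq_sqrt hA.le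
  have hG0 : 0 < landenMap k x := Real.sqrt_pos.mpr hA
  have hQ := landen_numerator_pos hk0 hk1 hx2
  rw [ellipticRadical, Real.sqrt_eq_iff_mul_self_eq_of_pos (by positivity), ← sq, div_pow,
    mul_pow, hG]
  field_simp
  rw [hG]
  linear_combination
    (-(1 + k ^ 2 - 2 * k ^ 2 * x ^ 2 + 2 * k * ellipticRadical k x)) *
      four_mul_landenSq_mul_one_sub (k := k) (by nlinarith) hx2.le
    - 4 * landenSq k x * (1 - landenSq k x) * sq_one_add_mul_one_sub_landenSq (x := x) hm

lemma hasDerivAt_ellipticRadical (hx : ellipticRadical k x ≠ 0) :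
    HasDerivAt (ellipticRadical k)
      (-(x * (1 + k ^ 2 - 2 * k ^ 2 * x ^ 2)) / ellipticRadical k x) x := by
  have hr : (1 - x ^ 2) * (1 - k ^ 2 * x ^ 2) ≠ 0 := fun h => hx (by simp [ellipticRadical, h])
  have hsq := hasDerivAt_pow 2 x
  refine (((hsq.const_sub 1).fun_mul ((hsq.const_mul (k ^ 2)).const_sub 1)).sqrt hr).congr_deriv ?_
  unfold ellipticRadical
  field_simp
  ring

lemma hasDerivAt_landenSq (hx : ellipticRadical k x ≠ 0) :
    HasDerivAt (landenSq k)
      (x * (1 + k ^ 2 - 2 * k ^ 2 * x ^ 2 + 2 * k * ellipticRadical k x)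
        / (2 * ellipticRadical k x)) x := by
  refine ((((hasDerivAt_pow 2 x).const_mul k).const_add 1).sub
    (hasDerivAt_ellipticRadical hx)).div_const 2 |>.congr_deriv ?_
  field_simp
  ring

lemma hasDerivAt_landenMap (hm : m ^ 2 * (1 + k) ^ 2 = 4 * k) (hk0 : 0 ≤ k) (hk1 : k ≤ 1)
    (hx0 : 0 < x) (hx1 : x < 1) :
    HasDerivAt (landenMap k)
      ((1 + k) / 2 * ellipticRadical m (landenMap k x) / ellipticRadical k x) x := by
  have hx2 : x ^ 2 < 1 := by nlinarith
  have hS := ellipticRadical_pos (k := k) (by nlinarith) hx2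
  have hA := landenSq_pos hk0 hk1 hx0.ne' hx2.le
  refine ((hasDerivAt_landenSq hS.ne').sqrt hA.ne').congr_deriv ?_
  rw [ellipticRadical_landenMap hm hk0 hk1 hx0 hx1, ← landenMap]
  field_simp

lemma ellipticRadical_landenMap_pos (hm : m ^ 2 * (1 + k) ^ 2 = 4 * k) (hk0 : 0 ≤ k)
    (hk1 : k ≤ 1) (hx0 : 0 < x) (hx1 : x < 1) :
    0 < ellipticRadical m (landenMap k x) := by
  have hx2 : x ^ 2 < 1 := by nlinarith
  have hG0 : 0 < landenMap k x := Real.sqrt_pos.mpr (landenSq_pos hk0 hk1 hx0.ne' hx2.le)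
  rw [ellipticRadical_landenMap hm hk0 hk1 hx0 hx1]
  have := landen_numerator_pos hk0 hk1 hx2
  positivity

lemma continuous_landenMap (k : ℝ) : Continuous (landenMap k) := by
  unfold landenMap landenSq ellipticRadical
  fun_prop

lemma landenMap_zero (k : ℝ) : landenMap k 0 = 0 := by
  simp [landenMap, landenSq, ellipticRadical]

end

theorem integral_one_div_ellipticRadical_landenMap {k m u : ℝ}
    (hm : m ^ 2 * (1 + k) ^ 2 = 4 * k) (hk0 : 0 ≤ k) (hk1 : k ≤ 1) (hu0 : 0 ≤ u) (hu1 : u ≤ 1) :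
    ∫ y in 0..landenMap k u, 1 / ellipticRadical m y
      = (1 + k) / 2 * ∫ x in 0..u, 1 / ellipticRadical k x := by
  have hIoo : ∀ x ∈ Ioo (min 0 u) (max 0 u), 0 < x ∧ x < 1 := by
    rw [min_eq_left hu0, max_eq_right hu0]
    exact fun x hx => ⟨hx.1, hx.2.trans_le hu1⟩
  have hsubst := integral_deriv_smul_comp_of_deriv_nonneg (g := fun y => 1 / ellipticRadical m y)
    (continuous_landenMap k).continuousOn
    (fun x hx => hasDerivAt_landenMap hm hk0 hk1 (hIoo x hx).1 (hIoo x hx).2)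
    (fun x _ => by unfold ellipticRadical; positivity)
  rw [landenMap_zero] at hsubst
  rw [← hsubst, ← integral_const_mul]
  refine integral_congr_uIoo fun x hx => ?_
  obtain ⟨hx0, hx1⟩ := hIoo x hx
  have := ellipticRadical_landenMap_pos hm hk0 hk1 hx0 hx1
  simp only [Function.comp_apply, smul_eq_mul]
  field_simp

/-- The Legendre Gleichung (the so-called Landen transformation): the
incomplete elliptic integral of the first kind with modulus `k` is related to
one with the transformed modulus `k̂ = 2√k/(1 + k)`. -/
theorem legendre_gleichung (k u : ℝ) (hk0 : 0 < k) (hk1 : k < 1)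
    (hu0 : 0 < u) (hu1 : u ≤ 1)
    (khat v : ℝ)
    (hkhat : khat = 2 * Real.sqrt k / (1 + k))
    (hv : v = Real.sqrt ((1 + k * u ^ 2
      - Real.sqrt ((1 - u ^ 2) * (1 - k ^ 2 * u ^ 2))) / 2)) :
    ∫ z in (0:ℝ)..u,
        1 / Real.sqrt ((1 - z ^ 2) * (1 - k ^ 2 * z ^ 2))
      = 2 / (1 + k) * ∫ z in (0:ℝ)..v,
          1 / Real.sqrt ((1 - z ^ 2) * (1 - khat ^ 2 * z ^ 2)) := by
  have hm : khat ^ 2 * (1 + k) ^ 2 = 4 * k := by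
    rw [hkhat, div_pow, mul_pow, Real.sq_sqrt hk0.le]
    field_simp
    ring
  subst hv
  change ∫ z in 0..u, 1 / ellipticRadical k z
    = 2 / (1 + k) * ∫ z in 0..landenMap k u, 1 / ellipticRadical khat z
  rw [integral_one_div_ellipticRadical_landenMap hm hk0.le hk1.le hu0.le hu1]
  field_simp
end
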